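/- arXiv:1504.01552 — 4 statements merged into one kernel-verified Lean document; each statement's English description precedes it below -/
import Mathlib

section
/- Let A = C × U × B × Z and suppose |U| ≥ |C|·|B|. Then, assigning for each cloud c and each power-zone z an injection from B into U, with the same user never used in two different clouds, yields an independent set of size |C|·|B|·|Z| in the hybrid conflict graph (edges CC1, CC2, CC3). -/
variable {C U B Z : Type*}

/-- Hybrid conflict graph adjacency (CC1, CC2, CC3). -/
def hybAdj (a a' : C × U × B × Z) : Prop :=
  a ≠ a' ∧ ((a.2.1 = a'.2.1 ∧ a.1 ≠ a'.1) ∨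
    (a.1, a.2.2.1, a.2.2.2) = (a'.1, a'.2.2.1, a'.2.2.2) ∨
    (a.2.1 = a'.2.1 ∧ a.2.2.2 = a'.2.2.2))

theorem stmt10 [Fintype C] [Fintype U] [Fintype B] [Fintype Z]
    [Nonempty C] [Nonempty U] [Nonempty B] [Nonempty Z]
    (h : Fintype.card C * Fintype.card B ≤ Fintype.card U) :
    ∃ S : Finset (C × U × B × Z),
      (∀ a ∈ S, ∀ a' ∈ S, ¬ hybAdj a a') ∧
      S.card = Fintype.card C * Fintype.card B * Fintype.card Z := by
  have h' : Fintype.card (C × B) ≤ Fintype.card U := by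
    simpa [Fintype.card_prod] using h
  classical
  obtain ⟨f⟩ : Nonempty ((C × B) ↪ U) := Function.Embedding.nonempty_of_card_le h'
  set g : C × B × Z → C × U × B × Z :=
    fun x => (x.1, f (x.1, x.2.1), x.2.1, x.2.2) with hg
  have hginj : Function.Injective g := by
    rintro ⟨c, b, z⟩ ⟨c', b', z'⟩ he
    simp only [hg, Prod.mk.injEq] at he
    exact Prod.ext he.1 (Prod.ext he.2.2.1 he.2.2.2)
  refine ⟨Finset.univ.image g, ?_, ?_⟩
  · rintro a ha a' ha'
    simp only [Finset.mem_image, Finset.mem_univ, true_and] at ha ha'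
    obtain ⟨⟨c, b, z⟩, rfl⟩ := ha
    obtain ⟨⟨c', b', z'⟩, rfl⟩ := ha'
    rintro ⟨hne, hadj⟩
    simp only [hg, Prod.mk.injEq, ne_eq] at hne hadj
    rcases hadj with ⟨hu, hc⟩ | ⟨hc, hb, hz⟩ | ⟨hu, hz⟩
    · exact hc (congrArg Prod.fst (f.injective hu))
    · exact hne ⟨hc, by rw [hc, hb], hb, hz⟩
    · have := f.injective hu
      obtain ⟨hc, hb⟩ := Prod.mk.injEq .. ▸ this
      exact hne ⟨hc, by rw [hc, hb], hb, hz⟩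
  · rw [Finset.card_image_of_injective _ hginj, Finset.card_univ, Fintype.card_prod,
      Fintype.card_prod, mul_assoc]
end

section
/- Let S be an independent set of size |C|·|B|·|Z| in the hybrid conflict graph on A = C × U × B × Z. Then the user sets U_c = {u : ∃ b, z, (c,u,b,z) ∈ S}, for c ∈ C, are pairwise disjoint and each has cardinality at least |B|; consequently |U| ≥ |C|·|B|. -/
variable {C U B Z : Type*}

theorem stmt14 [Fintype C] [Fintype U] [Fintype B] [Fintype Z]
    [Nonempty C] [Nonempty U] [Nonempty B] [Nonempty Z]
    [DecidableEq C] [DecidableEq U]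
    (S : Finset (C × U × B × Z))
    (hindep : ∀ a ∈ S, ∀ a' ∈ S, ¬ hybAdj a a')
    (hcard : S.card = Fintype.card C * Fintype.card B * Fintype.card Z)
    (Uc : C → Finset U)
    (hUc : ∀ c, Uc c = (S.filter (fun a => a.1 = c)).image (fun a => a.2.1)) :
    (∀ c c' : C, c ≠ c' → Disjoint (Uc c) (Uc c')) ∧
    (∀ c : C, Fintype.card B ≤ (Uc c).card) ∧
    Fintype.card C * Fintype.card B ≤ Fintype.card U := by
  classical
  -- the triple map is injective on S
  have hinj : Set.InjOn (fun a : C × U × B × Z => (a.1, a.2.2.1, a.2.2.2)) S := by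
    intro a ha a' ha' h
    by_contra hne
    exact hindep a ha a' ha' ⟨hne, Or.inr (Or.inl h)⟩
  -- hence surjective, since |S| = |C×B×Z|
  have himg : S.image (fun a => (a.1, a.2.2.1, a.2.2.2)) = (Finset.univ : Finset (C × B × Z)) := by
    apply Finset.eq_univ_of_card
    rw [Finset.card_image_of_injOn hinj, hcard]
    simp [Fintype.card_prod, mul_assoc]
  have hsurj : ∀ t : C × B × Z, ∃ a, a ∈ S ∧ (a.1, a.2.2.1, a.2.2.2) = t := by
    intro t
    have ht : t ∈ S.image (fun a => (a.1, a.2.2.1, a.2.2.2)) := by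
      rw [himg]; exact Finset.mem_univ t
    simpa using Finset.mem_image.mp ht
  choose g hgS hgt using hsurj
  -- disjointness
  have hdisj : ∀ c c' : C, c ≠ c' → Disjoint (Uc c) (Uc c') := by
    intro c c' hne
    rw [Finset.disjoint_left]
    intro u hu hu'
    rw [hUc c] at hu
    rw [hUc c'] at hu'
    obtain ⟨a, ha, hau⟩ := Finset.mem_image.mp hu
    obtain ⟨a', ha', hau'⟩ := Finset.mem_image.mp hu'
    obtain ⟨haS, hac⟩ := Finset.mem_filter.mp ha
    obtain ⟨haS', hac'⟩ := Finset.mem_filter.mp ha'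
    have hcc : a.1 ≠ a'.1 := by rw [hac, hac']; exact hne
    exact hindep a haS a' haS'
      ⟨fun h => hcc (by rw [h]), Or.inl ⟨hau.trans hau'.symm, hcc⟩⟩
  refine ⟨hdisj, ?_, ?_⟩
  · -- each Uc c has at least |B| users
    intro c
    obtain ⟨z₀⟩ := ‹Nonempty Z›
    have hle : (Finset.univ : Finset B).card ≤ (Uc c).card := by
      apply Finset.card_le_card_of_injOn (fun b => (g (c, b, z₀)).2.1)
      · intro b _
        rw [hUc c]
        apply Finset.mem_image.mpr
        refine ⟨g (c, b, z₀), Finset.mem_filter.mpr ⟨hgS _, ?_⟩, rfl⟩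
        have := hgt (c, b, z₀)
        exact (Prod.mk.injEq _ _ _ _).mp this |>.1
      · intro b _ b' _ h
        set a := g (c, b, z₀)
        set a' := g (c, b', z₀)
        have ht1 := hgt (c, b, z₀)
        have ht2 := hgt (c, b', z₀)
        obtain ⟨hc1, hb1, hz1⟩ : a.1 = c ∧ a.2.2.1 = b ∧ a.2.2.2 = z₀ := by
          simpa [Prod.ext_iff] using ht1
        obtain ⟨hc2, hb2, hz2⟩ : a'.1 = c ∧ a'.2.2.1 = b' ∧ a'.2.2.2 = z₀ := by
          simpa [Prod.ext_iff] using ht2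
        by_cases haa : a = a'
        · rw [← hb1, ← hb2, haa]
        · exact absurd (hindep a (hgS _) a' (hgS _)
            ⟨haa, Or.inr (Or.inr ⟨h, hz1.trans hz2.symm⟩)⟩) (fun x => x)
    simpa using hle
  · -- |U| ≥ |C| * |B|
    have hsum : Fintype.card C * Fintype.card B ≤ ∑ c : C, (Uc c).card := by
      calc Fintype.card C * Fintype.card B = ∑ _c : C, Fintype.card B := by
            simp [mul_comm]
        _ ≤ ∑ c : C, (Uc c).card := by
            apply Finset.sum_le_sum
            intro c _
            -- reuse the previous bound
            obtain ⟨z₀⟩ := ‹Nonempty Z›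
            have hle : (Finset.univ : Finset B).card ≤ (Uc c).card := by
              apply Finset.card_le_card_of_injOn (fun b => (g (c, b, z₀)).2.1)
              · intro b _
                rw [hUc c]
                apply Finset.mem_image.mpr
                refine ⟨g (c, b, z₀), Finset.mem_filter.mpr ⟨hgS _, ?_⟩, rfl⟩
                have := hgt (c, b, z₀)
                exact (Prod.mk.injEq _ _ _ _).mp this |>.1
              · intro b _ b' _ h
                set a := g (c, b, z₀)
                set a' := g (c, b', z₀)
                have ht1 := hgt (c, b, z₀)
                have ht2 := hgt (c, b', z₀)
                obtain ⟨hc1, hb1, hz1⟩ : a.1 = c ∧ a.2.2.1 = b ∧ a.2.2.2 = z₀ := by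
                  simpa [Prod.ext_iff] using ht1
                obtain ⟨hc2, hb2, hz2⟩ : a'.1 = c ∧ a'.2.2.1 = b' ∧ a'.2.2.2 = z₀ := by
                  simpa [Prod.ext_iff] using ht2
                by_cases haa : a = a'
                · rw [← hb1, ← hb2, haa]
                · exact absurd (hindep a (hgS _) a' (hgS _)
                    ⟨haa, Or.inr (Or.inr ⟨h, hz1.trans hz2.symm⟩)⟩) (fun x => x)
            simpa using hle
    have hbiU : ∑ c : C, (Uc c).card = (Finset.univ.biUnion Uc).card := by
      rw [Finset.card_biUnion]
      intro c _ c' _ hne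
      exact hdisj c c' hne
    calc Fintype.card C * Fintype.card B ≤ ∑ c : C, (Uc c).card := hsum
      _ = (Finset.univ.biUnion Uc).card := hbiU
      _ ≤ Fintype.card U := Finset.card_le_univ _
end

section
/- Let w : A → ℝ≥0 be nonnegative weights on A = C × U × B × Z, and let M_sched, M_hyb, M_sig be the maximum weights of independent sets of size k = |C|·|B|·|Z| in the scheduling-level conflict graph, the hybrid conflict graph, and the reduced (signal-level) conflict graph respectively, assuming each collection of size-k independent sets is nonempty. Then M_sched ≤ M_hyb ≤ M_sig. -/
/- Every scheduling-level independent set is hybrid-independent and every hybrid-independent set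
is signal-level independent, since the adjacency relations grow from `sigAdj` over `hybAdj` to
`schedAdj`; a maximum over a larger family of sets can only be larger. -/

variable {C U B Z : Type*}

/-- Scheduling-level conflict graph adjacency. -/
def schedAdj (a a' : C × U × B × Z) : Prop :=
  a ≠ a' ∧ ((a.2.1 = a'.2.1 ∧ a.1 ≠ a'.1) ∨
    (a.1, a.2.2.1, a.2.2.2) = (a'.1, a'.2.2.1, a'.2.2.2) ∨
    (a.2.1 = a'.2.1 ∧ a.2.2.1 ≠ a'.2.2.1))

/-- Reduced (signal-level) conflict graph adjacency. -/
def sigAdj (a a' : C × U × B × Z) : Prop :=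
  a ≠ a' ∧ ((a.1, a.2.2.1, a.2.2.2) = (a'.1, a'.2.2.1, a'.2.2.2) ∨
    (a.2.1 = a'.2.1 ∧ a.2.2.2 = a'.2.2.2))

theorem sup'_independent_le_of_le {α β : Type*} [Fintype α] [SemilatticeSup β]
    {r r' : α → α → Prop} (hr : r' ≤ r) (k : ℕ) (f : Finset α → β)
    [DecidablePred fun S : Finset α => (∀ a ∈ S, ∀ a' ∈ S, ¬ r a a') ∧ S.card = k]
    [DecidablePred fun S : Finset α => (∀ a ∈ S, ∀ a' ∈ S, ¬ r' a a') ∧ S.card = k]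
    (h : (Finset.univ.filter fun S : Finset α =>
      (∀ a ∈ S, ∀ a' ∈ S, ¬ r a a') ∧ S.card = k).Nonempty)
    (h' : (Finset.univ.filter fun S : Finset α =>
      (∀ a ∈ S, ∀ a' ∈ S, ¬ r' a a') ∧ S.card = k).Nonempty) :
    (Finset.univ.filter fun S : Finset α =>
        (∀ a ∈ S, ∀ a' ∈ S, ¬ r a a') ∧ S.card = k).sup' h f ≤
      (Finset.univ.filter fun S : Finset α =>
        (∀ a ∈ S, ∀ a' ∈ S, ¬ r' a a') ∧ S.card = k).sup' h' f :=
  Finset.sup'_mono f (Finset.monotone_filter_right _ fun _ _ ⟨hS, hcard⟩ =>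
    ⟨fun a ha a' ha' hadj => hS a ha a' ha' (hr a a' hadj), hcard⟩) h

theorem schedAdj_of_hybAdj {a a' : C × U × B × Z} (h : hybAdj a a') : schedAdj a a' := by
  obtain ⟨hne, hcloud | hcell | ⟨huser, hpz⟩⟩ := h
  · exact ⟨hne, .inl hcloud⟩
  · exact ⟨hne, .inr (.inl hcell)⟩
  by_cases hc : a.1 = a'.1
  · by_cases hb : a.2.2.1 = a'.2.2.1
    · exact ⟨hne, .inr (.inl (by rw [hc, hb, hpz]))⟩
    · exact ⟨hne, .inr (.inr ⟨huser, hb⟩)⟩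
  · exact ⟨hne, .inl ⟨huser, hc⟩⟩

theorem hybAdj_of_sigAdj {a a' : C × U × B × Z} (h : sigAdj a a') : hybAdj a a' :=
  ⟨h.1, .inr h.2⟩

open scoped Classical in
theorem stmt18_general [Fintype C] [Fintype U] [Fintype B] [Fintype Z]
    (w : C × U × B × Z → ℝ) (k : ℕ)
    (hSched : (Finset.univ.filter (fun S : Finset (C × U × B × Z) =>
      (∀ a ∈ S, ∀ a' ∈ S, ¬ schedAdj a a') ∧ S.card = k)).Nonempty)
    (hHyb : (Finset.univ.filter (fun S : Finset (C × U × B × Z) =>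
      (∀ a ∈ S, ∀ a' ∈ S, ¬ hybAdj a a') ∧ S.card = k)).Nonempty)
    (hSig : (Finset.univ.filter (fun S : Finset (C × U × B × Z) =>
      (∀ a ∈ S, ∀ a' ∈ S, ¬ sigAdj a a') ∧ S.card = k)).Nonempty) :
    (Finset.univ.filter (fun S : Finset (C × U × B × Z) =>
      (∀ a ∈ S, ∀ a' ∈ S, ¬ schedAdj a a') ∧ S.card = k)).sup' hSched
        (fun S => ∑ a ∈ S, w a)
    ≤ (Finset.univ.filter (fun S : Finset (C × U × B × Z) =>
      (∀ a ∈ S, ∀ a' ∈ S, ¬ hybAdj a a') ∧ S.card = k)).sup' hHyb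
        (fun S => ∑ a ∈ S, w a) ∧
    (Finset.univ.filter (fun S : Finset (C × U × B × Z) =>
      (∀ a ∈ S, ∀ a' ∈ S, ¬ hybAdj a a') ∧ S.card = k)).sup' hHyb
        (fun S => ∑ a ∈ S, w a)
    ≤ (Finset.univ.filter (fun S : Finset (C × U × B × Z) =>
      (∀ a ∈ S, ∀ a' ∈ S, ¬ sigAdj a a') ∧ S.card = k)).sup' hSig
        (fun S => ∑ a ∈ S, w a) :=
  ⟨sup'_independent_le_of_le (fun _ _ => schedAdj_of_hybAdj) k _ hSched hHyb,
    sup'_independent_le_of_le (fun _ _ => hybAdj_of_sigAdj) k _ hHyb hSig⟩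

open scoped Classical in
theorem stmt18 [Fintype C] [Fintype U] [Fintype B] [Fintype Z]
    (w : C × U × B × Z → ℝ) (hw : ∀ a, 0 ≤ w a) (k : ℕ)
    (hk : k = Fintype.card C * Fintype.card B * Fintype.card Z)
    (hSched : (Finset.univ.filter (fun S : Finset (C × U × B × Z) =>
      (∀ a ∈ S, ∀ a' ∈ S, ¬ schedAdj a a') ∧ S.card = k)).Nonempty)
    (hHyb : (Finset.univ.filter (fun S : Finset (C × U × B × Z) =>
      (∀ a ∈ S, ∀ a' ∈ S, ¬ hybAdj a a') ∧ S.card = k)).Nonempty)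
    (hSig : (Finset.univ.filter (fun S : Finset (C × U × B × Z) =>
      (∀ a ∈ S, ∀ a' ∈ S, ¬ sigAdj a a') ∧ S.card = k)).Nonempty) :
    (Finset.univ.filter (fun S : Finset (C × U × B × Z) =>
      (∀ a ∈ S, ∀ a' ∈ S, ¬ schedAdj a a') ∧ S.card = k)).sup' hSched
        (fun S => ∑ a ∈ S, w a)
    ≤ (Finset.univ.filter (fun S : Finset (C × U × B × Z) =>
      (∀ a ∈ S, ∀ a' ∈ S, ¬ hybAdj a a') ∧ S.card = k)).sup' hHyb
        (fun S => ∑ a ∈ S, w a) ∧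
    (Finset.univ.filter (fun S : Finset (C × U × B × Z) =>
      (∀ a ∈ S, ∀ a' ∈ S, ¬ hybAdj a a') ∧ S.card = k)).sup' hHyb
        (fun S => ∑ a ∈ S, w a)
    ≤ (Finset.univ.filter (fun S : Finset (C × U × B × Z) =>
      (∀ a ∈ S, ∀ a' ∈ S, ¬ sigAdj a a') ∧ S.card = k)).sup' hSig
        (fun S => ∑ a ∈ S, w a) :=
  stmt18_general w k hSched hHyb hSig
end

section
/- If |Z| = 1, then the scheduling-level conflict graph, hybrid conflict graph, and reduced (signal-level) conflict graph on A = C × U × B × Z have the following relation on size-|C|·|B| independent sets: every size-|C|·|B| independent set of the reduced graph in which each user appears at most once is an independent set of all three graphs; moreover, in the reduced graph with |Z| = 1, any independent set assigns each user to at most one association, hence the three graphs have exactly the same independent sets of size |C|·|B|. -/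
variable {C U B Z : Type*}

/- With a single pilot zone, two distinct associations of the same user are adjacent in the
reduced graph, and they differ in cloud or base station, so they are adjacent in the other two
graphs as well. The extra edges of the scheduling and hybrid graphs all join associations of a
common user, so for `Subsingleton Z` the three adjacency relations coincide outright. -/

section SinglePilotZone

variable [Subsingleton Z]

theorem sigAdj_of_ne_of_user_eq {a a' : C × U × B × Z} (hne : a ≠ a') (hu : a.2.1 = a'.2.1) :
    sigAdj a a' :=
  ⟨hne, Or.inr ⟨hu, Subsingleton.elim _ _⟩⟩

theorem schedAdj_iff_sigAdj (a a' : C × U × B × Z) : schedAdj a a' ↔ sigAdj a a' := by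
  obtain ⟨c, u, b, z⟩ := a
  obtain ⟨c', u', b', z'⟩ := a'
  obtain rfl : z = z' := Subsingleton.elim _ _
  simp only [schedAdj, sigAdj, ne_eq, Prod.mk.injEq, and_true]
  grind

theorem hybAdj_iff_sigAdj (a a' : C × U × B × Z) : hybAdj a a' ↔ sigAdj a a' := by
  obtain ⟨c, u, b, z⟩ := a
  obtain ⟨c', u', b', z'⟩ := a'
  obtain rfl : z = z' := Subsingleton.elim _ _
  simp only [hybAdj, sigAdj, ne_eq, Prod.mk.injEq, and_true]
  grind

theorem user_ne_of_sigAdj_independent {S : Set (C × U × B × Z)}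
    (hS : ∀ a ∈ S, ∀ a' ∈ S, ¬ sigAdj a a') :
    ∀ a ∈ S, ∀ a' ∈ S, a ≠ a' → a.2.1 ≠ a'.2.1 :=
  fun a ha a' ha' hne hu => hS a ha a' ha' (sigAdj_of_ne_of_user_eq hne hu)

end SinglePilotZone

theorem stmt19_general [Fintype C] [Fintype B] [Fintype Z]
    (hZ : Fintype.card Z = 1) :
    ∀ S : Finset (C × U × B × Z), S.card = Fintype.card C * Fintype.card B →
      (((∀ a ∈ S, ∀ a' ∈ S, ¬ sigAdj a a') →
          ∀ a ∈ S, ∀ a' ∈ S, a ≠ a' → a.2.1 ≠ a'.2.1) ∧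
       ((∀ a ∈ S, ∀ a' ∈ S, ¬ schedAdj a a') ↔
          (∀ a ∈ S, ∀ a' ∈ S, ¬ sigAdj a a')) ∧
       ((∀ a ∈ S, ∀ a' ∈ S, ¬ hybAdj a a') ↔
          (∀ a ∈ S, ∀ a' ∈ S, ¬ sigAdj a a'))) := by
  have : Subsingleton Z := Fintype.card_le_one_iff_subsingleton.mp hZ.le
  intro S _
  exact ⟨user_ne_of_sigAdj_independent (S := (S : Set (C × U × B × Z))),
    by simp only [schedAdj_iff_sigAdj], by simp only [hybAdj_iff_sigAdj]⟩

theorem stmt19 [Fintype C] [Fintype U] [Fintype B] [Fintype Z]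
    [Nonempty C] [Nonempty U] [Nonempty B] [Nonempty Z]
    (hZ : Fintype.card Z = 1) :
    ∀ S : Finset (C × U × B × Z), S.card = Fintype.card C * Fintype.card B →
      (((∀ a ∈ S, ∀ a' ∈ S, ¬ sigAdj a a') →
          ∀ a ∈ S, ∀ a' ∈ S, a ≠ a' → a.2.1 ≠ a'.2.1) ∧
       ((∀ a ∈ S, ∀ a' ∈ S, ¬ schedAdj a a') ↔
          (∀ a ∈ S, ∀ a' ∈ S, ¬ sigAdj a a')) ∧
       ((∀ a ∈ S, ∀ a' ∈ S, ¬ hybAdj a a') ↔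
          (∀ a ∈ S, ∀ a' ∈ S, ¬ sigAdj a a'))) :=
  stmt19_general hZ
end
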